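/- arXiv:1606.00129 — 2 statements merged into one kernel-verified Lean document; each statement's English description precedes it below -/
import Mathlib

section
/- Let X be a geodesic metric space, e ∈ X a basepoint, and N a Morse gauge. Then the subset X^(N)_e, with the metric induced from X, is 8N(3,0)-hyperbolic in the four-point sense: for all w,x,y,z ∈ X^(N)_e one has (x·y)_w ≥ min{(x·z)_w, (z·y)_w} − 8N(3,0); moreover, when the basepoint is e itself, the constant 4N(3,0) suffices: for all x,y,z ∈ X^(N)_e, (x·y)_e ≥ min{(x·z)_e, (z·y)_e} − 4N(3,0). -/
open Set Filter

section Defs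

variable {X : Type*} [MetricSpace X]

/-- A geodesic segment of length `L`, parametrized by arc length on `[0, L]`. -/
def IsGeodesicSeg (γ : ℝ → X) (L : ℝ) : Prop :=
  0 ≤ L ∧ ∀ s ∈ Icc (0:ℝ) L, ∀ t ∈ Icc (0:ℝ) L, dist (γ s) (γ t) = |s - t|

/-- A geodesic from `x` to `y`, parametrized by arc length on `[0, dist x y]`. -/
def IsGeodesicFromTo (γ : ℝ → X) (x y : X) : Prop :=
  IsGeodesicSeg γ (dist x y) ∧ γ 0 = x ∧ γ (dist x y) = y

/-- A geodesic ray, parametrized by arc length on `[0, ∞)`. -/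
def IsGeodesicRay (ℓ : ℝ → X) : Prop :=
  ∀ s ∈ Ici (0:ℝ), ∀ t ∈ Ici (0:ℝ), dist (ℓ s) (ℓ t) = |s - t|

/-- A geodesic metric space: any two points are joined by a geodesic. -/
def GeodesicSpace (X : Type*) [MetricSpace X] : Prop :=
  ∀ x y : X, ∃ γ : ℝ → X, IsGeodesicFromTo γ x y

/-- A `(K, C)`-quasi-geodesic defined on the interval `I ⊆ ℝ`. -/
def IsQuasiGeodesicOn (K C : ℝ) (I : Set ℝ) (σ : ℝ → X) : Prop :=
  ∀ s ∈ I, ∀ t ∈ I,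
    |s - t| / K - C ≤ dist (σ s) (σ t) ∧ dist (σ s) (σ t) ≤ K * |s - t| + C

/-- A Morse gauge: a nonnegative real `N K C` for every `K ≥ 1`, `C ≥ 0`. -/
def IsMorseGauge (N : ℝ → ℝ → ℝ) : Prop :=
  ∀ K C : ℝ, 1 ≤ K → 0 ≤ C → 0 ≤ N K C

/-- A subset `G ⊆ X` is `N`-Morse if for all `K ≥ 1`, `C ≥ 0`, every
`(K,C)`-quasi-geodesic with endpoints on `G` is contained in the closed
`N K C`-neighbourhood of `G`. -/
def IsMorseSet (N : ℝ → ℝ → ℝ) (G : Set X) : Prop :=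
  ∀ K C : ℝ, 1 ≤ K → 0 ≤ C → ∀ a b : ℝ, a ≤ b → ∀ σ : ℝ → X,
    IsQuasiGeodesicOn K C (Icc a b) σ → σ a ∈ G → σ b ∈ G →
    ∀ s ∈ Icc a b, ∃ g ∈ G, dist (σ s) g ≤ N K C

/-- An `N`-Morse geodesic from `x` to `y`. -/
def IsMorseGeodesicFromTo (N : ℝ → ℝ → ℝ) (γ : ℝ → X) (x y : X) : Prop :=
  IsGeodesicFromTo γ x y ∧ IsMorseSet N (γ '' Icc 0 (dist x y))

/-- An `N`-Morse geodesic ray. -/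
def IsMorseRay (N : ℝ → ℝ → ℝ) (ℓ : ℝ → X) : Prop :=
  IsGeodesicRay ℓ ∧ IsMorseSet N (ℓ '' Ici 0)

/-- The stratum `X^(N)_e`: points joined to `e` by an `N`-Morse geodesic. -/
def morseStratum (N : ℝ → ℝ → ℝ) (e : X) : Set X :=
  {y | ∃ γ : ℝ → X, IsMorseGeodesicFromTo N γ e y}

/-- The Gromov product `(x·y)_w`. -/
noncomputable def gprod (w x y : X) : ℝ := (dist w x + dist w y - dist x y) / 2

/-- A `B`-quasi-convex subset: geodesics with endpoints in `Y` stay in the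
closed `B`-neighbourhood of `Y`. -/
def IsQuasiConvex (B : ℝ) (Y : Set X) : Prop :=
  ∀ x ∈ Y, ∀ y ∈ Y, ∀ γ : ℝ → X, IsGeodesicFromTo γ x y →
    ∀ s ∈ Icc (0:ℝ) (dist x y), ∃ g ∈ Y, dist (γ s) g ≤ B

/-- An `N`-stable subset: quasi-convex, and any two of its points are joined
by an `N`-Morse geodesic of `X`. -/
def IsStableSubset (N : ℝ → ℝ → ℝ) (Y : Set X) : Prop :=
  (∃ B : ℝ, 0 ≤ B ∧ IsQuasiConvex B Y) ∧
    ∀ x ∈ Y, ∀ y ∈ Y, ∃ γ : ℝ → X, IsMorseGeodesicFromTo N γ x y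

variable {Y : Type*} [MetricSpace Y]

/-- A `(K,C)`-quasi-isometric embedding. -/
def IsQIEmbedding (K C : ℝ) (q : X → Y) : Prop :=
  ∀ x x' : X,
    dist x x' / K - C ≤ dist (q x) (q x') ∧ dist (q x) (q x') ≤ K * dist x x' + C

/-- A `(K,C)`-quasi-isometry. -/
def IsQuasiIsometry (K C : ℝ) (q : X → Y) : Prop :=
  IsQIEmbedding K C q ∧ ∀ y : Y, ∃ x : X, dist y (q x) ≤ C

end Defs

section Boundary

variable {X : Type*} [MetricSpace X]

/-- A sequence converges at infinity with respect to the basepoint `e`. -/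
def ConvAtInf (e : X) (f : ℕ → X) : Prop :=
  Tendsto (fun p : ℕ × ℕ => gprod e (f p.1) (f p.2)) atTop atTop

/-- Two sequences converging at infinity are equivalent. -/
def EquivAtInf (e : X) (f g : ℕ → X) : Prop :=
  Tendsto (fun p : ℕ × ℕ => gprod e (f p.1) (g p.2)) atTop atTop

/-- Sequences in `S` converging at infinity. -/
abbrev BSeq (S : Set X) (e : X) : Type _ :=
  {f : ℕ → X // (∀ n, f n ∈ S) ∧ ConvAtInf e f}

/-- The sequential boundary of `S ⊆ X` with basepoint `e`: sequences in `S`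
converging at infinity, up to equivalence. -/
def SeqBoundary (S : Set X) (e : X) : Type _ :=
  Quot (fun f g : BSeq S e => EquivAtInf e f.1 g.1)

/-- The boundary point represented by a convergent sequence. -/
def SeqBoundary.mk {S : Set X} {e : X} (f : BSeq S e) : SeqBoundary S e :=
  Quot.mk _ f

/-- The liminf of Gromov products of two sequences, valued in `EReal`. -/
noncomputable def seqGP (e : X) (f g : ℕ → X) : EReal :=
  Filter.liminf (fun p : ℕ × ℕ => ((gprod e (f p.1) (g p.2) : ℝ) : EReal)) atTop

/-- The Gromov product of two boundary points: the supremum over representing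
sequences of the liminf of Gromov products. -/
noncomputable def bGP (S : Set X) (e : X) (ξ η : SeqBoundary S e) : EReal :=
  sSup {r : EReal | ∃ f g : BSeq S e,
    SeqBoundary.mk f = ξ ∧ SeqBoundary.mk g = η ∧ r = seqGP e f.1 g.1}

open Classical in
/-- `exp (−ε·r)` for an extended real `r`, with value `0` at `r = ⊤`. -/
noncomputable def visGauge (ε : ℝ) (r : EReal) : ℝ :=
  if r = ⊤ then 0 else Real.exp (-ε * r.toReal)

/-- `d` is a visual metric on the sequential boundary of `S`:
a metric comparable to `exp(−ε·(Gromov product))` for some parameter `ε > 0`. -/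
def IsVisualMetric (S : Set X) (e : X)
    (d : SeqBoundary S e → SeqBoundary S e → ℝ) : Prop :=
  (∀ ξ η, 0 ≤ d ξ η) ∧ (∀ ξ η, d ξ η = d η ξ) ∧
  (∀ ξ η ζ, d ξ ζ ≤ d ξ η + d η ζ) ∧ (∀ ξ η, d ξ η = 0 ↔ ξ = η) ∧
  ∃ ε : ℝ, 0 < ε ∧ ∃ k₁ : ℝ, 0 < k₁ ∧ ∃ k₂ : ℝ, 0 < k₂ ∧
    ∀ ξ η, k₁ * visGauge ε (bGP S e ξ η) ≤ d ξ η ∧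
      d ξ η ≤ k₂ * visGauge ε (bGP S e ξ η)

/-- `η` is (the restriction of) a self-homeomorphism of `[0,∞)`. -/
def IsHomeoIci (η : ℝ → ℝ) : Prop :=
  ContinuousOn η (Ici 0) ∧ StrictMonoOn η (Ici 0) ∧ η 0 = 0 ∧
    Tendsto η atTop atTop ∧ ∀ t ∈ Ici (0:ℝ), 0 ≤ η t

/-- `F` is a quasi-symmetry onto its image, for the "distances" `dA`, `dB`. -/
def IsQuasiSymmetryOnto {A B : Type*} (dA : A → A → ℝ) (dB : B → B → ℝ)
    (F : A → B) : Prop :=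
  Function.Injective F ∧ ∃ η : ℝ → ℝ, IsHomeoIci η ∧
    ∀ x y z : A, x ≠ y → x ≠ z → y ≠ z →
      dB (F x) (F y) / dB (F x) (F z) ≤ η (dA x y / dA x z)

end Boundary

/-- `X` (with basepoint `x`) is stably subsumed by `Y` (with basepoint `y`):
every stratum of `X` quasi-isometrically embeds in some stratum of `Y`. -/
def StablySubsumed (X Y : Type*) [MetricSpace X] [MetricSpace Y]
    (x : X) (y : Y) : Prop :=
  ∀ N : ℝ → ℝ → ℝ, IsMorseGauge N →
    ∃ N' : ℝ → ℝ → ℝ, IsMorseGauge N' ∧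
      ∃ K C : ℝ, 1 ≤ K ∧ 0 ≤ C ∧ ∃ f : X → Y,
        (∀ a ∈ morseStratum N x, f a ∈ morseStratum N' y) ∧
        ∀ a ∈ morseStratum N x, ∀ b ∈ morseStratum N x,
          dist a b / K - C ≤ dist (f a) (f b) ∧ dist (f a) (f b) ≤ K * dist a b + C

/-- Durham–Taylor stability of `f : Y → X`. -/
def DTStable {Y X : Type*} [MetricSpace Y] [MetricSpace X] (f : Y → X) : Prop :=
  ∀ K C : ℝ, 1 ≤ K → 0 ≤ C → ∃ R : ℝ, 0 ≤ R ∧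
    ∀ a₁ b₁ a₂ b₂ : ℝ, a₁ ≤ b₁ → a₂ ≤ b₂ → ∀ σ₁ σ₂ : ℝ → X,
      IsQuasiGeodesicOn K C (Icc a₁ b₁) σ₁ → IsQuasiGeodesicOn K C (Icc a₂ b₂) σ₂ →
      σ₁ a₁ = σ₂ a₂ → σ₁ b₁ = σ₂ b₂ →
      σ₁ a₁ ∈ Set.range f → σ₁ b₁ ∈ Set.range f →
      (∀ s ∈ Icc a₁ b₁, ∃ t ∈ Icc a₂ b₂, dist (σ₁ s) (σ₂ t) ≤ R) ∧
      (∀ t ∈ Icc a₂ b₂, ∃ s ∈ Icc a₁ b₁, dist (σ₁ s) (σ₂ t) ≤ R)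

/-!
Let `x, z` lie in the stratum and let `p` be a point of a geodesic `[x, z]` closest to `e`.
A geodesic `[e, p]` followed by either half of `[x, z]` is a `(3, 0)`-quasi-geodesic, so by the
Morse property the `N`-Morse geodesics `[e, x]` and `[e, z]` stay `2 N(3,0)`-close to `[e, p]`
up to time `d(e, p) ≥ (x·z)_e`; hence they `4 N(3,0)`-fellow-travel up to time `(x·z)_e`.
Comparing `[e, x]` and `[e, y]` through `[e, z]` at time `min ((x·z)_e, (z·y)_e)` gives the
inequality based at `e`. Moving the base point to `w` uses the identity
`(x·y)_w = (x·y)_e + d(e, w) - (x·w)_e - (y·w)_e` and costs a factor `2`.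
-/

section GromovProduct

variable {X : Type*} [MetricSpace X]

theorem gprod_comm (w x y : X) : gprod w x y = gprod w y x := by
  simp only [gprod, dist_comm x y, add_comm (dist w x)]

theorem gprod_le_dist_left (w x y : X) : gprod w x y ≤ dist w x := by
  have := dist_triangle w x y
  simp only [gprod]; linarith

theorem gprod_nonneg (w x y : X) : 0 ≤ gprod w x y := by
  have := dist_triangle_left x y w
  simp only [gprod]; linarith

theorem gprod_le_dist_of_dist_add_dist_eq {e x z p : X}
    (hp : dist x p + dist p z = dist x z) : gprod e x z ≤ dist e p := by
  have := dist_triangle e p x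
  have := dist_triangle e p z
  simp only [gprod, dist_comm p x] at *; linarith

theorem gprod_eq_gprod_add_dist_sub (e w x y : X) :
    gprod w x y = gprod e x y + dist e w - gprod e x w - gprod e y w := by
  simp only [gprod, dist_comm w x, dist_comm w y]; ring

def FourPointAt (w : X) (δ : ℝ) (S : Set X) : Prop :=
  ∀ x ∈ S, ∀ y ∈ S, ∀ z ∈ S, min (gprod w x z) (gprod w z y) - δ ≤ gprod w x y

theorem min_add_sub_two_mul_le_add {a b c p q r δ : ℝ} (habc : min b c - δ ≤ a)
    (hapq : min p q - δ ≤ a) (hrbp : min b p - δ ≤ r) (hrcq : min c q - δ ≤ r) :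
    min (b + q) (c + p) - 2 * δ ≤ a + r := by
  rcases le_total b c with h₁ | h₁ <;> rcases le_total p q with h₂ | h₂ <;>
    rcases le_total b p with h₃ | h₃ <;> rcases le_total c q with h₄ | h₄ <;>
    simp only [min_eq_left, min_eq_right, *] at habc hapq hrbp hrcq <;>
    linarith [min_le_left (b + q) (c + p), min_le_right (b + q) (c + p)]

theorem FourPointAt.of_base {e w : X} {δ : ℝ} {S : Set X} (h : FourPointAt e δ S)
    (hw : w ∈ S) : FourPointAt w (2 * δ) S := by
  intro x hx y hy z hz
  have key := min_add_sub_two_mul_le_add (h x hx y hy z hz)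
    (by simpa only [gprod_comm e w y] using h x hx y hy w hw)
    (by simpa only [gprod_comm e z x] using h z hz w hw x hx) (h z hz w hw y hy)
  have hmin : min (gprod w x z) (gprod w z y) = min (gprod e x z + gprod e y w)
      (gprod e z y + gprod e x w) + (dist e w - gprod e x w - gprod e y w - gprod e z w) := by
    rw [← min_add_add_right, gprod_eq_gprod_add_dist_sub e w x z,
      gprod_eq_gprod_add_dist_sub e w z y]
    congr 1 <;> ring
  rw [hmin, gprod_eq_gprod_add_dist_sub e w x y]
  linarith

end GromovProduct

section Geodesic

variable {X : Type*} [MetricSpace X] {γ : ℝ → X} {x y : X} {s : ℝ}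

theorem IsGeodesicFromTo.dist_left (hγ : IsGeodesicFromTo γ x y)
    (hs : s ∈ Icc 0 (dist x y)) : dist x (γ s) = s := by
  rw [← hγ.2.1, hγ.1.2 0 ⟨le_rfl, hγ.1.1⟩ s hs, zero_sub, abs_neg, abs_of_nonneg hs.1]

theorem IsGeodesicFromTo.dist_right (hγ : IsGeodesicFromTo γ x y)
    (hs : s ∈ Icc 0 (dist x y)) : dist (γ s) y = dist x y - s := by
  rw [← hγ.2.2, hγ.1.2 s hs _ ⟨hγ.1.1, le_rfl⟩, abs_of_nonpos (by linarith [hs.2]), hγ.2.2]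
  ring

theorem IsGeodesicFromTo.dist_add_dist (hγ : IsGeodesicFromTo γ x y)
    (hs : s ∈ Icc 0 (dist x y)) : dist x (γ s) + dist (γ s) y = dist x y := by
  rw [hγ.dist_left hs, hγ.dist_right hs]; ring

theorem IsGeodesicFromTo.reverse_sub (hγ : IsGeodesicFromTo γ x y)
    (hs : s ∈ Icc 0 (dist x y)) : IsGeodesicFromTo (fun u => γ (s - u)) (γ s) x := by
  unfold IsGeodesicFromTo
  rw [dist_comm, hγ.dist_left hs]
  refine ⟨⟨hs.1, fun u hu v hv => ?_⟩, by simp, by simpa using hγ.2.1⟩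
  rw [hγ.1.2 _ ⟨by linarith [hu.2], by linarith [hu.1, hs.2]⟩ _
    ⟨by linarith [hv.2], by linarith [hv.1, hs.2]⟩, abs_sub_comm]
  ring_nf

theorem IsGeodesicFromTo.shift_add (hγ : IsGeodesicFromTo γ x y)
    (hs : s ∈ Icc 0 (dist x y)) : IsGeodesicFromTo (fun u => γ (s + u)) (γ s) y := by
  unfold IsGeodesicFromTo
  rw [hγ.dist_right hs]
  refine ⟨⟨by linarith [hs.2], fun u hu v hv => ?_⟩, by simp, by simpa using hγ.2.2⟩
  rw [hγ.1.2 _ ⟨by linarith [hu.1, hs.1], by linarith [hu.2]⟩ _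
    ⟨by linarith [hv.1, hs.1], by linarith [hv.2]⟩]
  ring_nf

theorem IsGeodesicFromTo.exists_isMinOn_dist (hγ : IsGeodesicFromTo γ x y) (e : X) :
    ∃ m ∈ Icc 0 (dist x y), IsMinOn (fun u => dist e (γ u)) (Icc 0 (dist x y)) m := by
  have hLip : LipschitzOnWith 1 γ (Icc 0 (dist x y)) :=
    .mk_one fun u hu v hv => (hγ.1.2 u hu v hv).trans_le (Real.dist_eq u v).ge
  exact isCompact_Icc.exists_isMinOn (nonempty_Icc.2 hγ.1.1)
    ((continuous_const.dist continuous_id).comp_continuousOn hLip.continuousOn)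

theorem IsGeodesicFromTo.dist_le_two_mul_of_dist_le (hγ : IsGeodesicFromTo γ x y)
    {q : X} {t D : ℝ} (ht : t ∈ Icc 0 (dist x y)) (hq : dist x q = t)
    (hs : s ∈ Icc 0 (dist x y)) (hsq : dist (γ s) q ≤ D) : dist (γ t) q ≤ 2 * D := by
  have hst : |s - t| ≤ D := by
    have := abs_dist_sub_le (γ s) q x
    rw [dist_comm (γ s) x, dist_comm q x, hγ.dist_left hs, hq] at this
    linarith
  calc dist (γ t) q ≤ dist (γ t) (γ s) + dist (γ s) q := dist_triangle _ _ _
    _ ≤ 2 * D := by rw [hγ.1.2 t ht s hs, abs_sub_comm]; linarith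

theorem IsGeodesicFromTo.sub_le_gprod {β : ℝ → X} {e : X} (hγ : IsGeodesicFromTo γ e x)
    (hβ : IsGeodesicFromTo β e y) {m : ℝ} (hmx : m ∈ Icc 0 (dist e x))
    (hmy : m ∈ Icc 0 (dist e y)) : m - dist (γ m) (β m) / 2 ≤ gprod e x y := by
  have := dist_triangle4 x (γ m) (β m) y
  rw [dist_comm x (γ m), hγ.dist_right hmx, hβ.dist_right hmy] at this
  simp only [gprod]; linarith

end Geodesic

section Concatenation

variable {X : Type*}

noncomputable def concatPath (γ g : ℝ → X) (ρ s : ℝ) : X :=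
  if s ≤ ρ then γ s else g (s - ρ)

variable {γ g : ℝ → X} {ρ s : ℝ}

theorem concatPath_of_le (hs : s ≤ ρ) : concatPath γ g ρ s = γ s := if_pos hs

theorem concatPath_of_ge (h : γ ρ = g 0) (hs : ρ ≤ s) : concatPath γ g ρ s = g (s - ρ) := by
  rcases hs.eq_or_lt with rfl | hs
  · rw [concatPath_of_le le_rfl, sub_self, h]
  · exact if_neg hs.not_ge

variable [MetricSpace X]

theorem isQuasiGeodesicOn_of_le {K C : ℝ} {I : Set ℝ} {σ : ℝ → X}
    (h : ∀ s ∈ I, ∀ u ∈ I, s ≤ u →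
      (u - s) / K - C ≤ dist (σ s) (σ u) ∧ dist (σ s) (σ u) ≤ K * (u - s) + C) :
    IsQuasiGeodesicOn K C I σ := by
  intro s hs u hu
  rcases le_total s u with hsu | hus
  · rw [abs_sub_comm, abs_of_nonneg (sub_nonneg.2 hsu)]
    exact h s hs u hu hsu
  · rw [abs_of_nonneg (sub_nonneg.2 hus), dist_comm]
    exact h u hu s hs hus

variable {e p x : X}

/-- The distance is at least `dist e p - s`, as `p` is a point of `g` closest to `e`, and at
least `m - (dist e p - s)` by the triangle inequality through `p`. -/
theorem div_three_le_dist_of_forall_dist_le (hγ : IsGeodesicFromTo γ e p) (hg : IsGeodesicFromTo g p x)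
    (hmin : ∀ u ∈ Icc 0 (dist p x), dist e p ≤ dist e (g u)) (hs : s ∈ Icc 0 (dist e p))
    {m : ℝ} (hm : m ∈ Icc 0 (dist p x)) : (dist e p - s + m) / 3 ≤ dist (γ s) (g m) := by
  have h₁ := dist_triangle e (γ s) (g m)
  have h₂ := dist_triangle_left p (g m) (γ s)
  rw [hγ.dist_left hs] at h₁
  rw [hγ.dist_right hs, hg.dist_left hm] at h₂
  linarith [hmin m hm]

theorem IsGeodesicFromTo.isQuasiGeodesicOn_concatPath (hγ : IsGeodesicFromTo γ e p)
    (hg : IsGeodesicFromTo g p x)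
    (hmin : ∀ u ∈ Icc 0 (dist p x), dist e p ≤ dist e (g u)) :
    IsQuasiGeodesicOn 3 0 (Icc 0 (dist e p + dist p x)) (concatPath γ g (dist e p)) := by
  have hjoin : γ (dist e p) = g 0 := hγ.2.2.trans hg.2.1.symm
  refine isQuasiGeodesicOn_of_le fun s hs u hu hsu => ?_
  suffices (u - s) / 3 ≤ dist (concatPath γ g (dist e p) s) (concatPath γ g (dist e p) u) ∧
      dist (concatPath γ g (dist e p) s) (concatPath γ g (dist e p) u) ≤ u - s by
    constructor <;> linarith
  rcases le_total u (dist e p) with hu' | hu'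
  · rw [concatPath_of_le hu', concatPath_of_le (hsu.trans hu'),
      hγ.1.2 s ⟨hs.1, hsu.trans hu'⟩ u ⟨hu.1, hu'⟩, abs_sub_comm, abs_of_nonneg (by linarith)]
    constructor <;> linarith
  rcases le_total s (dist e p) with hs' | hs'
  · have hm : u - dist e p ∈ Icc 0 (dist p x) := ⟨by linarith, by linarith [hu.2]⟩
    rw [concatPath_of_le hs', concatPath_of_ge hjoin hu']
    refine ⟨by simpa using div_three_le_dist_of_forall_dist_le hγ hg hmin ⟨hs.1, hs'⟩ hm, ?_⟩
    calc dist (γ s) (g (u - dist e p)) ≤ dist (γ s) p + dist p (g (u - dist e p)) :=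
          dist_triangle _ _ _
      _ = u - s := by rw [hγ.dist_right ⟨hs.1, hs'⟩, hg.dist_left hm]; ring
  · rw [concatPath_of_ge hjoin hs', concatPath_of_ge hjoin hu',
      hg.1.2 _ ⟨by linarith, by linarith [hs.2]⟩ _ ⟨by linarith, by linarith [hu.2]⟩,
      abs_sub_comm, abs_of_nonneg (by linarith)]
    constructor <;> linarith

end Concatenation

section Morse

variable {X : Type*} [MetricSpace X] {N : ℝ → ℝ → ℝ} {α : ℝ → X} {e x : X}

theorem IsMorseGeodesicFromTo.dist_le_of_forall_dist_le (hα : IsMorseGeodesicFromTo N α e x)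
    {γ g : ℝ → X} {p : X} (hγ : IsGeodesicFromTo γ e p) (hg : IsGeodesicFromTo g p x)
    (hmin : ∀ u ∈ Icc 0 (dist p x), dist e p ≤ dist e (g u)) {t : ℝ}
    (ht : t ∈ Icc 0 (dist e p)) : dist (α t) (γ t) ≤ 2 * N 3 0 := by
  have hjoin : γ (dist e p) = g 0 := hγ.2.2.trans hg.2.1.symm
  have hpx : dist e p ≤ dist e x := hg.2.2 ▸ hmin _ ⟨dist_nonneg, le_rfl⟩
  have hstart : concatPath γ g (dist e p) 0 ∈ α '' Icc 0 (dist e x) :=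
    ⟨0, ⟨le_rfl, dist_nonneg⟩, by rw [concatPath_of_le dist_nonneg, hγ.2.1, hα.1.2.1]⟩
  have hend : concatPath γ g (dist e p) (dist e p + dist p x) ∈ α '' Icc 0 (dist e x) :=
    ⟨dist e x, ⟨dist_nonneg, le_rfl⟩, by
      rw [concatPath_of_ge hjoin (le_add_of_nonneg_right dist_nonneg), add_sub_cancel_left,
        hg.2.2, hα.1.2.2]⟩
  obtain ⟨_, ⟨s, hs, rfl⟩, hst⟩ := hα.2 3 0 (by norm_num) le_rfl 0 _ (by positivity) _
    (hγ.isQuasiGeodesicOn_concatPath hg hmin) hstart hend t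
    ⟨ht.1, ht.2.trans (le_add_of_nonneg_right dist_nonneg)⟩
  rw [concatPath_of_le ht.2, dist_comm] at hst
  exact hα.1.dist_le_two_mul_of_dist_le ⟨ht.1, ht.2.trans hpx⟩ (hγ.dist_left ht) hs hst

theorem IsMorseGeodesicFromTo.dist_le_of_mem_Icc_gprod (hX : GeodesicSpace X)
    (hα : IsMorseGeodesicFromTo N α e x) {ζ : ℝ → X} {z : X}
    (hζ : IsMorseGeodesicFromTo N ζ e z) {t : ℝ} (ht : t ∈ Icc 0 (gprod e x z)) :
    dist (α t) (ζ t) ≤ 4 * N 3 0 := by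
  obtain ⟨g, hg⟩ := hX x z
  obtain ⟨m, hm, hmin⟩ := hg.exists_isMinOn_dist e
  obtain ⟨γ, hγ⟩ := hX e (g m)
  have htm : t ∈ Icc 0 (dist e (g m)) :=
    ⟨ht.1, ht.2.trans (gprod_le_dist_of_dist_add_dist_eq (hg.dist_add_dist hm))⟩
  have hmx : dist (g m) x = m := by rw [dist_comm, hg.dist_left hm]
  have hmz : dist (g m) z = dist x z - m := hg.dist_right hm
  have hαγ := hα.dist_le_of_forall_dist_le hγ (hg.reverse_sub hm)
    (fun u hu => hmin ⟨by linarith [hu.2], by linarith [hu.1, hm.2]⟩) htm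
  have hζγ := hζ.dist_le_of_forall_dist_le hγ (hg.shift_add hm)
    (fun u hu => hmin ⟨by linarith [hu.1, hm.1], by linarith [hu.2]⟩) htm
  linarith [dist_triangle_right (α t) (ζ t) (γ t)]

theorem fourPointAt_morseStratum (hX : GeodesicSpace X) (e : X) (N : ℝ → ℝ → ℝ) :
    FourPointAt e (4 * N 3 0) (morseStratum N e) := by
  rintro x ⟨α, hα⟩ y ⟨β, hβ⟩ z ⟨ζ, hζ⟩
  set m := min (gprod e x z) (gprod e z y)
  have hm : 0 ≤ m := le_min (gprod_nonneg e x z) (gprod_nonneg e z y)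
  have hxz : m ≤ gprod e x z := min_le_left _ _
  have hyz : m ≤ gprod e y z := gprod_comm e z y ▸ min_le_right _ _
  have hαζ := hα.dist_le_of_mem_Icc_gprod hX hζ ⟨hm, hxz⟩
  have hβζ := hβ.dist_le_of_mem_Icc_gprod hX hζ ⟨hm, hyz⟩
  have := hα.1.sub_le_gprod hβ.1 ⟨hm, hxz.trans (gprod_le_dist_left e x z)⟩
    ⟨hm, hyz.trans (gprod_le_dist_left e y z)⟩
  linarith [dist_triangle_right (α m) (β m) (ζ m)]

end Morse

theorem statement0_general {X : Type*} [MetricSpace X] (hX : GeodesicSpace X) (e : X)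
    (N : ℝ → ℝ → ℝ) :
    (∀ w ∈ morseStratum N e, ∀ x ∈ morseStratum N e, ∀ y ∈ morseStratum N e,
        ∀ z ∈ morseStratum N e,
        gprod w x y ≥ min (gprod w x z) (gprod w z y) - 8 * N 3 0) ∧
    (∀ x ∈ morseStratum N e, ∀ y ∈ morseStratum N e, ∀ z ∈ morseStratum N e,
        gprod e x y ≥ min (gprod e x z) (gprod e z y) - 4 * N 3 0) := by
  have he := fourPointAt_morseStratum hX e N
  refine ⟨fun w hw x hx y hy z hz => ?_, he⟩
  have := he.of_base hw x hx y hy z hz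
  linarith

/-- each stratum `X^(N)_e` is 8N(3,0)-hyperbolic in the four-point
sense, and 4N(3,0)-hyperbolic when the base point of the products is `e`. -/
theorem statement0 {X : Type*} [MetricSpace X] (hX : GeodesicSpace X) (e : X)
    (N : ℝ → ℝ → ℝ) (hN : IsMorseGauge N) :
    (∀ w ∈ morseStratum N e, ∀ x ∈ morseStratum N e, ∀ y ∈ morseStratum N e,
        ∀ z ∈ morseStratum N e,
        gprod w x y ≥ min (gprod w x z) (gprod w z y) - 8 * N 3 0) ∧
    (∀ x ∈ morseStratum N e, ∀ y ∈ morseStratum N e, ∀ z ∈ morseStratum N e,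
        gprod e x y ≥ min (gprod e x z) (gprod e z y) - 4 * N 3 0) :=
  statement0_general hX e N
end

section
/- Let X and Y be geodesic metric spaces, let q : X → Y be a (K,C)-quasi-isometry, let e ∈ X, and let N be a Morse gauge. Then there exists a Morse gauge N', depending only on N, K and C, such that q(X^(N)_e) ⊆ Y^(N')_{q(e)}: for every x ∈ X^(N)_e there is an N'-Morse geodesic in Y from q(e) to q(x). -/
open Set Filter

/-! Pull quasi-geodesics of `Y` back through a coarse inverse of `q`: a quasi-geodesic with
endpoints on `q(γ)` becomes a quasi-geodesic of `X` with endpoints on the `N`-Morse geodesic `γ`,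
so it stays near `γ`, and the original one stays near `q(γ)`. Hence `q(γ)` is a Morse set; in
particular a geodesic `γ'` from `q e` to `q x` stays near `q(γ)`, and a coarse intermediate value
argument along `γ'` shows that conversely `q(γ)` stays near `γ'`. A set at bounded Hausdorff
distance from a Morse set is Morse, with a gauge depending only on the distance, so `γ'` is
Morse. -/

lemma exists_abs_sub_le_of_coarse_continuous {f : ℝ → ℝ} {a b t Δ : ℝ} (hab : a ≤ b)
    (hf : ∀ s ∈ Icc a b, ∀ s' ∈ Icc a b, |s - s'| ≤ 1 → |f s - f s'| ≤ Δ)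
    (ha : f a ≤ t) (hb : t ≤ f b) : ∃ s ∈ Icc a b, |f s - t| ≤ Δ := by
  by_contra! hfar
  set p : ℕ → ℝ := fun i => min (a + i) b
  have hp : ∀ i, p i ∈ Icc a b := fun i =>
    ⟨le_min (le_add_of_nonneg_right i.cast_nonneg) hab, min_le_right _ _⟩
  have hstep : ∀ i, |p (i + 1) - p i| ≤ 1 := fun i => by
    simpa [p, add_sub_add_left_eq_sub] using abs_min_sub_min_le_max (a + (i + 1 : ℕ)) b (a + i) b
  have hbelow : ∀ i, f (p i) < t := by
    intro i
    induction i with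
    | zero =>
      have hΔ : 0 ≤ Δ := by simpa using hf a ⟨le_rfl, hab⟩ a ⟨le_rfl, hab⟩ (by simp)
      have h₀ := hfar a ⟨le_rfl, hab⟩
      rw [abs_of_nonpos (by linarith)] at h₀
      simpa [p, hab] using (by linarith : f a < t)
    | succ i ih =>
      have hclose := abs_le.mp (hf _ (hp (i + 1)) _ (hp i) (hstep i))
      rcases lt_abs.mp (hfar _ (hp (i + 1))) with h | h <;> linarith
  have hend : p ⌈b - a⌉₊ = b := min_eq_right (by linarith [Nat.le_ceil (b - a)])
  have hlast := hbelow ⌈b - a⌉₊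
  rw [hend] at hlast
  linarith

lemma exists_selection_with_endpoints {α β : Type*} {P : α → β → Prop} (h : ∀ s, ∃ x, P s x)
    {a b : α} (hab : a ≠ b) {xa xb : β} (ha : P a xa) (hb : P b xb) :
    ∃ f : α → β, f a = xa ∧ f b = xb ∧ ∀ s, P s (f s) := by
  classical
  choose g hg using h
  refine ⟨fun s => if s = a then xa else if s = b then xb else g s, by simp,
    by simp [hab.symm], fun s => ?_⟩
  dsimp only
  split_ifs with h₁ h₂
  · exact h₁ ▸ ha
  · exact h₂ ▸ hb
  · exact hg s

section QuasiGeodesic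

variable {X Y : Type*} [MetricSpace X] [MetricSpace Y]

lemma IsGeodesicSeg.isQuasiGeodesicOn {γ : ℝ → X} {L : ℝ} (h : IsGeodesicSeg γ L) :
    IsQuasiGeodesicOn 1 0 (Icc 0 L) γ := fun s hs t ht => by
  simp [h.2 s hs t ht]

lemma IsGeodesicFromTo.left_mem_image {γ : ℝ → X} {x y : X} (h : IsGeodesicFromTo γ x y) :
    x ∈ γ '' Icc 0 (dist x y) :=
  ⟨0, ⟨le_rfl, dist_nonneg⟩, h.2.1⟩

lemma IsGeodesicFromTo.right_mem_image {γ : ℝ → X} {x y : X} (h : IsGeodesicFromTo γ x y) :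
    y ∈ γ '' Icc 0 (dist x y) :=
  ⟨dist x y, ⟨dist_nonneg, le_rfl⟩, h.2.2⟩

lemma IsQuasiGeodesicOn.of_dist_le {K C D : ℝ} {I : Set ℝ} {σ τ : ℝ → X}
    (hσ : IsQuasiGeodesicOn K C I σ) (h : ∀ s ∈ I, dist (σ s) (τ s) ≤ D) :
    IsQuasiGeodesicOn K (C + 2 * D) I τ := by
  intro s hs t ht
  have hσst := hσ s hs t ht
  have hs' := h s hs
  have ht' := h t ht
  have h₁ := dist_triangle4 (σ s) (τ s) (τ t) (σ t)
  have h₂ := dist_triangle4 (τ s) (σ s) (σ t) (τ t)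
  rw [dist_comm (τ t) (σ t)] at h₁
  rw [dist_comm (τ s) (σ s)] at h₂
  constructor <;> linarith [hσst.1, hσst.2]

lemma IsQIEmbedding.dist_le {K C : ℝ} {q : X → Y} (hq : IsQIEmbedding K C q) (hK : 0 < K)
    (x x' : X) : dist x x' ≤ K * (dist (q x) (q x') + C) := by
  have h := (hq x x').1
  rw [sub_le_iff_le_add, div_le_iff₀ hK] at h
  linarith

lemma IsQuasiGeodesicOn.of_comp {K C K' C' : ℝ} {I : Set ℝ} {q : X → Y} {τ : ℝ → X}
    (hq : IsQIEmbedding K C q) (hK : 1 ≤ K) (hC : 0 ≤ C' + C)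
    (h : IsQuasiGeodesicOn K' C' I (q ∘ τ)) :
    IsQuasiGeodesicOn (K * K') (K * (C' + C)) I τ := by
  have hK₀ : 0 < K := by linarith
  intro s hs t ht
  obtain ⟨hlow, hup⟩ := h s hs t ht
  simp only [Function.comp_apply] at hlow hup
  constructor
  · have hqτ := (hq (τ s) (τ t)).2
    have hconst : (C' + C) / K ≤ K * (C' + C) := by
      have hKK : 1 ≤ K * K := one_le_mul_of_one_le_of_one_le hK hK
      rw [div_le_iff₀ hK₀]; nlinarith [mul_le_mul_of_nonneg_right hKK hC]
    have hdiv : (|s - t| / K' - C' - C) / K ≤ dist (τ s) (τ t) := by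
      rw [div_le_iff₀ hK₀]; linarith
    have hsplit : (|s - t| / K' - C' - C) / K = |s - t| / (K * K') - (C' + C) / K := by
      rw [mul_comm K K', ← div_div]; ring
    linarith
  · calc dist (τ s) (τ t) ≤ K * (dist (q (τ s)) (q (τ t)) + C) := hq.dist_le hK₀ _ _
      _ ≤ K * (K' * |s - t| + C' + C) := by gcongr
      _ = K * K' * |s - t| + K * (C' + C) := by ring

lemma IsGeodesicFromTo.dist_map_le_of_map_eq {K C : ℝ} {q : X → Y} (hq : IsQIEmbedding K C q)
    (hK : 0 < K) {e x : X} {γ : ℝ → X} (hγ : IsGeodesicFromTo γ e x) (hqex : q e = q x) :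
    ∀ t ∈ Icc 0 (dist e x), dist (q (γ t)) (q e) ≤ K * (K * C) + C := by
  intro t ht
  have hL : dist e x ≤ K * C := by simpa [hqex] using hq.dist_le hK e x
  calc dist (q (γ t)) (q e) ≤ K * dist (γ t) e + C := (hq _ _).2
    _ = K * t + C := by
        rw [← hγ.2.1, hγ.1.2 t ht 0 ⟨le_rfl, hγ.1.1⟩, sub_zero, abs_of_nonneg ht.1]
    _ ≤ K * (K * C) + C := by gcongr; exact ht.2.trans hL

lemma IsGeodesicFromTo.exists_dist_le_of_near_image {K C D : ℝ} {q : X → Y}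
    (hq : IsQIEmbedding K C q) (hK : 1 ≤ K) (hD : 0 ≤ D) {e x : X} {γ : ℝ → X} {γ' : ℝ → Y}
    (hγ : IsGeodesicFromTo γ e x) (hγ' : IsGeodesicFromTo γ' (q e) (q x))
    (hnear : ∀ s ∈ Icc 0 (dist (q e) (q x)),
      ∃ g ∈ q '' (γ '' Icc 0 (dist e x)), dist (γ' s) g ≤ D) :
    ∀ g ∈ q '' (γ '' Icc 0 (dist e x)), ∃ y ∈ γ' '' Icc 0 (dist (q e) (q x)),
      dist g y ≤ K * (K * (1 + 2 * D + C)) + C + D := by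
  rintro _ ⟨_, ⟨t, ht, rfl⟩, rfl⟩
  have hK₀ : 0 < K := by linarith
  have hKC : K * (K * C) ≤ K * (K * (1 + 2 * D + C)) := by gcongr; linarith
  rcases (dist_nonneg : 0 ≤ dist (q e) (q x)).eq_or_lt with hqex | hL'
  · refine ⟨γ' 0, mem_image_of_mem _ ⟨le_rfl, hqex.le⟩, ?_⟩
    have := hγ.dist_map_le_of_map_eq hq hK₀ (dist_eq_zero.mp hqex.symm) t ht
    rw [hγ'.2.1]
    linarith
  obtain ⟨⟨-, hγd⟩, hγ0, hγL⟩ := hγ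
  obtain ⟨⟨-, hγ'd⟩, hγ'0, hγ'L⟩ := hγ'
  set L := dist e x
  set L' := dist (q e) (q x)
  set Δ := K * (1 + 2 * D + C)
  have hsel : ∀ s, ∃ w, s ∈ Icc 0 L' → w ∈ Icc 0 L ∧ dist (γ' s) (q (γ w)) ≤ D := by
    intro s
    by_cases hs : s ∈ Icc 0 L'
    · obtain ⟨_, ⟨_, ⟨w, hw, rfl⟩, rfl⟩, hdist⟩ := hnear s hs
      exact ⟨w, fun _ => ⟨hw, hdist⟩⟩
    · exact ⟨0, fun h => absurd h hs⟩
  obtain ⟨w, hw0, hwL, hw⟩ := exists_selection_with_endpoints hsel hL'.ne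
    (fun _ => ⟨⟨le_rfl, dist_nonneg⟩, by rw [hγ'0, hγ0, dist_self]; exact hD⟩)
    (fun _ => ⟨⟨dist_nonneg, le_rfl⟩, by rw [hγ'L, hγL, dist_self]; exact hD⟩)
  have hcoarse : ∀ s ∈ Icc 0 L', ∀ s' ∈ Icc 0 L', |s - s'| ≤ 1 → |w s - w s'| ≤ Δ := by
    intro s hs s' hs' hss'
    obtain ⟨hws, hds⟩ := hw s hs
    obtain ⟨hws', hds'⟩ := hw s' hs'
    have hq' : dist (q (γ (w s))) (q (γ (w s'))) ≤ 1 + 2 * D := by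
      have := dist_triangle4 (q (γ (w s))) (γ' s) (γ' s') (q (γ (w s')))
      rw [dist_comm (q (γ (w s))) (γ' s), hγ'd s hs s' hs'] at this
      linarith
    calc |w s - w s'| = dist (γ (w s)) (γ (w s')) := (hγd _ hws _ hws').symm
      _ ≤ K * (dist (q (γ (w s))) (q (γ (w s'))) + C) := hq.dist_le hK₀ _ _
      _ ≤ K * (1 + 2 * D + C) := by gcongr
  obtain ⟨s, hs, hst⟩ := exists_abs_sub_le_of_coarse_continuous (t := t) hL'.le hcoarse
    (by rw [hw0]; exact ht.1) (by rw [hwL]; exact ht.2)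
  obtain ⟨hws, hds⟩ := hw s hs
  refine ⟨γ' s, mem_image_of_mem _ hs, ?_⟩
  calc dist (q (γ t)) (γ' s)
      ≤ dist (q (γ t)) (q (γ (w s))) + dist (q (γ (w s))) (γ' s) := dist_triangle _ _ _
    _ ≤ K * |t - w s| + C + D := by
        rw [← hγd t ht (w s) hws, dist_comm _ (γ' s)]
        exact add_le_add (hq _ _).2 hds
    _ ≤ K * Δ + C + D := by rw [abs_sub_comm]; gcongr

end QuasiGeodesic

section Morse

variable {X Y : Type*} [MetricSpace X] [MetricSpace Y] {N : ℝ → ℝ → ℝ} {G : Set X}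

lemma IsMorseSet.isQuasiConvex (hG : IsMorseSet N G) : IsQuasiConvex (N 1 0) G :=
  fun x hx y hy γ hγ =>
    hG 1 0 le_rfl le_rfl 0 (dist x y) dist_nonneg γ hγ.1.isQuasiGeodesicOn
      (by rw [hγ.2.1]; exact hx) (by rw [hγ.2.2]; exact hy)

lemma IsMorseSet.of_close {H : Set X} {D : ℝ} (hG : IsMorseSet N G) (hD : 0 ≤ D)
    (hHG : ∀ y ∈ H, ∃ g ∈ G, dist y g ≤ D) (hGH : ∀ g ∈ G, ∃ y ∈ H, dist g y ≤ D) :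
    IsMorseSet (fun K C => N K (C + 2 * D) + 2 * D) H := by
  intro K C hK hC a b hab σ hσ ha hb s hs
  have hmove : ∀ u, ∃ g, dist (σ u) g ≤ D ∧ (u = a ∨ u = b → g ∈ G) := by
    intro u
    by_cases hu : u = a ∨ u = b
    · obtain ⟨g, hg, hdist⟩ := hHG (σ u) (by rcases hu with rfl | rfl <;> assumption)
      exact ⟨g, hdist, fun _ => hg⟩
    · exact ⟨σ u, by simpa using hD, fun h => absurd h hu⟩
  choose σ' hσσ' hσ'G using hmove
  obtain ⟨g, hg, hσ'g⟩ := hG K (C + 2 * D) hK (by linarith) a b hab σ'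
    (hσ.of_dist_le fun u _ => hσσ' u) (hσ'G a (Or.inl rfl)) (hσ'G b (Or.inr rfl)) s hs
  obtain ⟨y, hy, hgy⟩ := hGH g hg
  refine ⟨y, hy, ?_⟩
  calc dist (σ s) y ≤ dist (σ s) (σ' s) + dist (σ' s) g + dist g y := dist_triangle4 _ _ _ _
    _ ≤ D + N K (C + 2 * D) + D := by gcongr; exact hσσ' s
    _ = N K (C + 2 * D) + 2 * D := by ring

lemma IsMorseSet.image {K C : ℝ} {q : X → Y} (hG : IsMorseSet N G)
    (hq : IsQuasiIsometry K C q) (hK : 1 ≤ K) (hC : 0 ≤ C) :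
    IsMorseSet (fun K' C' => K * N (K * K') (K * (C' + 3 * C)) + 2 * C) (q '' G) := by
  intro K' C' hK' hC' a b hab σ hσ ha hb s hs
  have hpull : ∀ u, ∃ x, dist (σ u) (q x) ≤ C ∧ (u = a ∨ u = b → x ∈ G) := by
    intro u
    by_cases hu : u = a ∨ u = b
    · obtain ⟨x, hx, hqx⟩ : σ u ∈ q '' G := by rcases hu with rfl | rfl <;> assumption
      exact ⟨x, by simpa [hqx] using hC, fun _ => hx⟩
    · obtain ⟨x, hx⟩ := hq.2 (σ u)
      exact ⟨x, hx, fun h => absurd h hu⟩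
  choose τ hστ hτG using hpull
  have hτ : IsQuasiGeodesicOn (K * K') (K * (C' + 3 * C)) (Icc a b) τ := by
    have h := (hσ.of_dist_le (τ := q ∘ τ) fun u _ => hστ u).of_comp hq.1 hK (by linarith)
    rwa [show C' + 2 * C + C = C' + 3 * C by ring] at h
  obtain ⟨x, hx, hτx⟩ := hG (K * K') (K * (C' + 3 * C)) (by nlinarith)
    (mul_nonneg (by linarith) (by linarith)) a b hab τ hτ (hτG a (Or.inl rfl))
    (hτG b (Or.inr rfl)) s hs
  refine ⟨q x, mem_image_of_mem q hx, ?_⟩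
  calc dist (σ s) (q x) ≤ dist (σ s) (q (τ s)) + dist (q (τ s)) (q x) := dist_triangle _ _ _
    _ ≤ C + (K * dist (τ s) x + C) := add_le_add (hστ s) (hq.1 _ _).2
    _ ≤ C + (K * N (K * K') (K * (C' + 3 * C)) + C) := by gcongr
    _ = K * N (K * K') (K * (C' + 3 * C)) + 2 * C := by ring

end Morse

/-- a `(K,C)`-quasi-isometry maps `X^(N)_e` into `Y^(N')_{q e}`,
where `N'` depends only on `N`, `K` and `C`. -/
theorem statement2 (N : ℝ → ℝ → ℝ) (hN : IsMorseGauge N)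
    (K C : ℝ) (hK : 1 ≤ K) (hC : 0 ≤ C) :
    ∃ N' : ℝ → ℝ → ℝ, IsMorseGauge N' ∧
      ∀ (X Y : Type*) [MetricSpace X] [MetricSpace Y],
        GeodesicSpace X → GeodesicSpace Y →
        ∀ q : X → Y, IsQuasiIsometry K C q → ∀ e : X,
          ∀ x ∈ morseStratum N e,
            ∃ γ : ℝ → Y, IsMorseGeodesicFromTo N' γ (q e) (q x) := by
  -- `D₀` is the quasi-convexity constant of `q(γ)`, and `D` bounds the Hausdorff distance
  -- between `q(γ)` and `γ'`.
  set D₀ := K * N (K * 1) (K * (0 + 3 * C)) + 2 * C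
  set D := K * (K * (1 + 2 * D₀ + C)) + C + D₀
  have hK₀ : 0 ≤ K := by linarith
  have hD₀ : 0 ≤ D₀ := by
    have := hN (K * 1) (K * (0 + 3 * C)) (by linarith) (mul_nonneg hK₀ (by linarith))
    have := mul_nonneg hK₀ this
    linarith
  have hD₀D : D₀ ≤ D := le_add_of_nonneg_left <| add_nonneg
    (mul_nonneg hK₀ (mul_nonneg hK₀ (by linarith))) hC
  refine ⟨fun K' C' => K * N (K * K') (K * (C' + 2 * D + 3 * C)) + 2 * C + 2 * D,
    fun K' C' hK' hC' => ?_, ?_⟩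
  · have := hN (K * K') (K * (C' + 2 * D + 3 * C)) (by nlinarith) (mul_nonneg hK₀ (by linarith))
    have := mul_nonneg hK₀ this
    linarith
  intro X Y _ _ _ hY q hq e x ⟨γ, hγ, hΓ⟩
  obtain ⟨γ', hγ'⟩ := hY (q e) (q x)
  have hqΓ := hΓ.image hq hK hC
  have hγ'near := hqΓ.isQuasiConvex (q e) (mem_image_of_mem q hγ.left_mem_image)
    (q x) (mem_image_of_mem q hγ.right_mem_image) γ' hγ'
  refine ⟨γ', hγ', hqΓ.of_close (hD₀.trans hD₀D) ?_
    (hγ.exists_dist_le_of_near_image hq.1 hK hD₀ hγ' hγ'near)⟩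
  rintro _ ⟨s, hs, rfl⟩
  obtain ⟨g, hg, hdist⟩ := hγ'near s hs
  exact ⟨g, hg, hdist.trans hD₀D⟩
end
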